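/- arXiv:2109.11263 — 3 statements merged into one kernel-verified Lean document; each statement's English description precedes it below -/
import Mathlib

section
/- Let P be a partition in a set A and let B, C ⊆ R(P) with B ∩ C = ∅ and R_{P,B} ∩ R_{P,C} = ∅. Then (P/P_(B)) / (P_(B∪C)/(P_(B∪C))_(B)) = (P/P_(B)) / (P/P_(B))_(C), where the left-hand quotient makes sense because P_(B∪C)/(P_(B∪C))_(B) coincides with the restriction of P/P_(B) to C. -/
namespace PartitionOps

variable {α : Type*} [DecidableEq α]

/-- The support `R(P)` of a collection of finite sets: the union of its members. -/
def supp (P : Finset (Finset α)) : Finset α := P.sup id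

/-- A partition in `A`: a finite collection of pairwise disjoint nonempty finite sets. -/
def IsPartition (P : Finset (Finset α)) : Prop :=
  (∀ I ∈ P, I.Nonempty) ∧ ∀ I ∈ P, ∀ I' ∈ P, I ≠ I' → Disjoint I I'

/-- The restriction `P_(B) = { I ∩ B : I ∈ P, I ∩ B ≠ ∅ }`. -/
def restrict (P : Finset (Finset α)) (B : Finset α) : Finset (Finset α) :=
  (P.filter fun I => (I ∩ B).Nonempty).image (· ∩ B)

/-- `R_{P,B}`: the union of the members of `P` meeting `B`. -/
def RB (P : Finset (Finset α)) (B : Finset α) : Finset α :=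
  (P.filter fun I => (I ∩ B).Nonempty).sup id

/-- The quotient `P / P_(B)`: the members of `P` disjoint from `B`, together with
`R_{P,B} \ B` (omitted when empty). -/
def quot (P : Finset (Finset α)) (B : Finset α) : Finset (Finset α) :=
  (insert (RB P B \ B) (P.filter fun I => I ∩ B = ∅)).erase ∅

/-- Quotient of `P` by a partition `Q` (meaningful when `Q` coincides with the
restriction of `P` to the support of `Q`): `P / Q := P / P_(R(Q))`. -/
def quotBy (P Q : Finset (Finset α)) : Finset (Finset α) := quot P (supp Q)

lemma mem_restrict {P : Finset (Finset α)} {B : Finset α} {J : Finset α} :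
    J ∈ restrict P B ↔ ∃ I ∈ P, (I ∩ B).Nonempty ∧ I ∩ B = J := by
  simp [restrict, Finset.mem_image, Finset.mem_filter, and_assoc]

lemma mem_quot {P : Finset (Finset α)} {B : Finset α} {J : Finset α} :
    J ∈ quot P B ↔ J ≠ ∅ ∧ (J = RB P B \ B ∨ (J ∈ P ∧ J ∩ B = ∅)) := by
  simp [quot, Finset.mem_erase, Finset.mem_insert, Finset.mem_filter]

lemma subset_RB {P : Finset (Finset α)} {B : Finset α} (hB : B ⊆ supp P) :
    B ⊆ RB P B := by
  intro b hb
  obtain ⟨I, hI, hbI⟩ := Finset.mem_sup.mp (hB hb)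
  exact Finset.mem_sup.mpr
    ⟨I, Finset.mem_filter.mpr ⟨hI, ⟨b, Finset.mem_inter.mpr ⟨hbI, hb⟩⟩⟩, hbI⟩

lemma subset_RB_of_meet {P : Finset (Finset α)} {B I : Finset α} (hI : I ∈ P)
    (h : (I ∩ B).Nonempty) : I ⊆ RB P B := fun a ha =>
  Finset.mem_sup.mpr ⟨I, Finset.mem_filter.mpr ⟨hI, h⟩, ha⟩

/-- a block meeting `C` is disjoint from `B` -/
lemma meetC_disjB {P : Finset (Finset α)} {B C : Finset α} (hB : B ⊆ supp P)
    (hR : Disjoint (RB P B) (RB P C)) {I : Finset α} (hI : I ∈ P)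
    (h : (I ∩ C).Nonempty) : I ∩ B = ∅ :=
  Finset.disjoint_iff_inter_eq_empty.mp
    (hR.symm.mono (subset_RB_of_meet hI h) (subset_RB hB))

lemma lemA {P : Finset (Finset α)} {B C : Finset α} (hB : B ⊆ supp P)
    (hC : C ⊆ supp P) (hBC : Disjoint B C) (hR : Disjoint (RB P B) (RB P C)) :
    quot (restrict P (B ∪ C)) B = restrict P C := by
  have hCBe : C ∩ B = ∅ := Finset.disjoint_iff_inter_eq_empty.mp hBC.symm
  -- if I meets B then I ∩ (B ∪ C) = I ∩ B
  have keyB : ∀ I ∈ P, (I ∩ B).Nonempty → I ∩ (B ∪ C) = I ∩ B := by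
    intro I hI h
    have hIC : I ∩ C = ∅ := meetC_disjB hC hR.symm hI h
    rw [Finset.inter_union_distrib_left, hIC, Finset.union_empty]
  -- if I is disjoint from B then I ∩ (B ∪ C) = I ∩ C
  have keyC : ∀ I : Finset α, I ∩ B = ∅ → I ∩ (B ∪ C) = I ∩ C := by
    intro I h
    rw [Finset.inter_union_distrib_left, h, Finset.empty_union]
  -- the members of the restriction meeting B have J ∩ B = J... compute RB \ B = ∅
  have hRBQ : RB (restrict P (B ∪ C)) B \ B = ∅ := by
    rw [Finset.sdiff_eq_empty_iff_subset]
    intro a ha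
    obtain ⟨J, hJ, haJ⟩ := Finset.mem_sup.mp ha
    obtain ⟨hJQ, hJB⟩ := Finset.mem_filter.mp hJ
    obtain ⟨I, hI, hne, hIJ⟩ := mem_restrict.mp hJQ
    have hIBne : (I ∩ B).Nonempty := by
      obtain ⟨x, hx⟩ := hJB
      rw [← hIJ] at hx
      simp only [Finset.mem_inter, Finset.mem_union] at hx
      exact ⟨x, Finset.mem_inter.mpr ⟨hx.1.1, hx.2⟩⟩
    have hJeq : J = I ∩ B := by rw [← hIJ, keyB I hI hIBne]
    rw [hJeq] at haJ
    exact (Finset.mem_inter.mp haJ).2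
  ext J
  simp only [mem_quot, mem_restrict, hRBQ]
  constructor
  · rintro ⟨hne, h | ⟨hJQ, hJB⟩⟩
    · exact absurd h hne
    · obtain ⟨I, hI, hne', hIJ⟩ := hJQ
      have hIB : I ∩ B = ∅ := by
        by_contra h
        have hIBne : (I ∩ B).Nonempty := Finset.nonempty_iff_ne_empty.mpr h
        have : J = I ∩ B := by rw [← hIJ, keyB I hI hIBne]
        rw [this] at hJB
        rw [Finset.inter_assoc, Finset.inter_self] at hJB
        exact h hJB
      have hJC : I ∩ C = J := by rw [← hIJ, keyC I hIB]
      exact ⟨I, hI, hJC ▸ Finset.nonempty_iff_ne_empty.mpr hne, hJC⟩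
  · rintro ⟨I, hI, hne, hIJ⟩
    have hIB : I ∩ B = ∅ := meetC_disjB hB hR hI hne
    have hJeq : I ∩ (B ∪ C) = J := by rw [keyC I hIB, hIJ]
    refine ⟨by rw [← hIJ]; exact Finset.nonempty_iff_ne_empty.mp hne, Or.inr ⟨?_, ?_⟩⟩
    · exact ⟨I, hI, hJeq ▸ (hIJ ▸ hne), hJeq⟩
    · rw [← hIJ, Finset.inter_assoc]
      rw [hCBe, Finset.inter_empty]

lemma lemB {P : Finset (Finset α)} {B C : Finset α} (hB : B ⊆ supp P)
    (hC : C ⊆ supp P) (hR : Disjoint (RB P B) (RB P C)) :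
    restrict (quot P B) C = restrict P C := by
  ext J
  rw [mem_restrict, mem_restrict]
  constructor
  · rintro ⟨K, hK, hne, hKJ⟩
    rw [mem_quot] at hK
    obtain ⟨hKne, h | ⟨hKP, hKB⟩⟩ := hK
    · exfalso
      obtain ⟨x, hx⟩ := hne
      rw [h] at hx
      simp only [Finset.mem_inter, Finset.mem_sdiff] at hx
      exact Finset.disjoint_left.mp hR hx.1.1 (subset_RB hC hx.2)
    · exact ⟨K, hKP, hne, hKJ⟩
  · rintro ⟨I, hI, hne, hIJ⟩
    have hIB : I ∩ B = ∅ := meetC_disjB hB hR hI hne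
    have hIne : I ≠ ∅ := by
      intro h; rw [h, Finset.empty_inter] at hne; exact Finset.not_nonempty_empty hne
    exact ⟨I, mem_quot.mpr ⟨hIne, Or.inr ⟨hI, hIB⟩⟩, hne, hIJ⟩

lemma supp_restrict {P : Finset (Finset α)} {C : Finset α} (hC : C ⊆ supp P) :
    supp (restrict P C) = C := by
  ext a
  constructor
  · intro ha
    obtain ⟨J, hJ, haJ⟩ := Finset.mem_sup.mp ha
    obtain ⟨I, _, _, hIJ⟩ := mem_restrict.mp hJ
    rw [← hIJ] at haJ
    exact (Finset.mem_inter.mp haJ).2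
  · intro ha
    obtain ⟨I, hI, haI⟩ := Finset.mem_sup.mp (hC ha)
    have hmem : a ∈ I ∩ C := Finset.mem_inter.mpr ⟨haI, ha⟩
    exact Finset.mem_sup.mpr ⟨I ∩ C, mem_restrict.mpr ⟨I, hI, ⟨a, hmem⟩, rfl⟩, hmem⟩

/-- if `B ∩ C = ∅` and `R_{P,B} ∩ R_{P,C} = ∅`, then
`(P/P_(B)) / (P_(B∪C)/(P_(B∪C))_(B)) = (P/P_(B)) / (P/P_(B))_(C)`, the left-hand
quotient making sense because `P_(B∪C)/(P_(B∪C))_(B)` coincides with the restriction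
of `P/P_(B)` to `C`. -/
theorem quotBy_eq_quot_of_disjoint_RB (P : Finset (Finset α)) (hP : IsPartition P)
    (B C : Finset α) (hB : B ⊆ supp P) (hC : C ⊆ supp P) (hBC : Disjoint B C)
    (hR : Disjoint (RB P B) (RB P C)) :
    quot (restrict P (B ∪ C)) B = restrict (quot P B) C ∧
      quotBy (quot P B) (quot (restrict P (B ∪ C)) B) = quot (quot P B) C := by
  have hA := lemA hB hC hBC hR
  have hB' := lemB hB hC hR
  refine ⟨by rw [hA, hB'], ?_⟩
  rw [quotBy, hA, supp_restrict hC]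


end PartitionOps
end

section
/- Let P = {I_1, …, I_m}, Q, and S be partitions in a set A whose supports R(P), R(Q), R(S) are pairwise disjoint. Then, in the free vector space V on partitions in A, Σ_{1 ≤ a, b ≤ m, a ≠ b} Σ_{ι : I_a → Q} Σ_{μ : I_b → S} (P ∘_a^ι Q) ∘_b^μ S = Σ_{1 ≤ a, b ≤ m, a ≠ b} Σ_{ι : I_a → S} Σ_{μ : I_b → Q} (P ∘_a^ι S) ∘_b^μ Q, where in each summand the second insertion is performed at the member I_b of the partition obtained by the first insertion. -/
namespace PartitionOps

variable {α : Type*} [DecidableEq α]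

/-- The preimage `ι⁻¹(J) ⊆ B` of a member `J` under a map `ι` defined on `B`. -/
def fiber (B : Finset α) (f : {x // x ∈ B} → Finset α) (J : Finset α) : Finset α :=
  (B.attach.filter fun x => f x = J).image Subtype.val

/-- The insertion `P ∘ₐ^ι Q` of `Q` into `P` at the member `Ia` via `ι : Ia → Q`:
remove `Ia` from `P` and add the sets `J ∪ ι⁻¹(J)` for the members `J` of `Q`. -/
def ins (P : Finset (Finset α)) (Ia : Finset α) (Q : Finset (Finset α))
    (ι : {x // x ∈ Ia} → {J // J ∈ Q}) : Finset (Finset α) :=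
  P.erase Ia ∪ Q.image fun J => J ∪ fiber Ia (fun x => (ι x : Finset α)) J

lemma mem_supp_of_mem {P : Finset (Finset α)} {I : Finset α} (hI : I ∈ P) {x : α}
    (hx : x ∈ I) : x ∈ supp P := Finset.mem_sup.2 ⟨I, hI, hx⟩

lemma notMem_image_ins {P Q : Finset (Finset α)} {Ib : Finset α}
    (hIbP : Ib ∈ P) (hQ : IsPartition Q) (hPQ : Disjoint (supp P) (supp Q))
    (g : Finset α → Finset α) (hg : ∀ J, J ⊆ g J) :
    Ib ∉ Q.image g := by
  intro h
  obtain ⟨J, hJ, hEq⟩ := Finset.mem_image.1 h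
  obtain ⟨x, hx⟩ := hQ.1 J hJ
  have hxQ : x ∈ supp Q := mem_supp_of_mem hJ hx
  have hxIb : x ∈ Ib := hEq ▸ hg J hx
  exact (Finset.disjoint_left.1 hPQ (mem_supp_of_mem hIbP hxIb)) hxQ

lemma ins_ins_comm {P Q S : Finset (Finset α)} {Ia Ib : Finset α}
    (hIaP : Ia ∈ P) (hIbP : Ib ∈ P)
    (hQ : IsPartition Q) (hS : IsPartition S)
    (hPQ : Disjoint (supp P) (supp Q)) (hPS : Disjoint (supp P) (supp S))
    (ι : {x // x ∈ Ia} → {J // J ∈ Q}) (μ : {x // x ∈ Ib} → {Kk // Kk ∈ S}) :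
    ins (ins P Ia Q ι) Ib S μ = ins (ins P Ib S μ) Ia Q ι := by
  have hIbQ : Ib ∉ Q.image fun J => J ∪ fiber Ia (fun x => (ι x : Finset α)) J :=
    notMem_image_ins hIbP hQ hPQ _ (fun J => Finset.subset_union_left)
  have hIaS : Ia ∉ S.image fun Kk => Kk ∪ fiber Ib (fun x => (μ x : Finset α)) Kk :=
    notMem_image_ins hIaP hS hPS _ (fun Kk => Finset.subset_union_left)
  unfold ins
  rw [Finset.erase_union_distrib, Finset.erase_union_distrib,
      Finset.erase_eq_of_notMem hIbQ, Finset.erase_eq_of_notMem hIaS,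
      Finset.erase_right_comm, Finset.union_right_comm]

variable (Kf : Type*) [Field Kf] [CharZero Kf]

/-- for partitions `P`, `Q`, `S` with pairwise disjoint supports, in the
free vector space on the partitions in `A`,
`Σ_{a ≠ b} Σ_{ι : Iₐ → Q} Σ_{μ : I_b → S} (P ∘ₐ^ι Q) ∘_b^μ S =
 Σ_{a ≠ b} Σ_{ι : Iₐ → S} Σ_{μ : I_b → Q} (P ∘ₐ^ι S) ∘_b^μ Q`. -/
theorem double_ins_sum_symm (P Q S : Finset (Finset α))
    (hP : IsPartition P) (hQ : IsPartition Q) (hS : IsPartition S)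
    (hPQ : Disjoint (supp P) (supp Q)) (hPS : Disjoint (supp P) (supp S))
    (hQS : Disjoint (supp Q) (supp S)) :
    (∑ Ia ∈ P, ∑ Ib ∈ P.erase Ia,
        ∑ ι : {x // x ∈ Ia} → {J // J ∈ Q},
          ∑ μ : {x // x ∈ Ib} → {Kk // Kk ∈ S},
            Finsupp.single (ins (ins P Ia Q ι) Ib S μ) (1 : Kf)) =
      ∑ Ia ∈ P, ∑ Ib ∈ P.erase Ia,
        ∑ ι : {x // x ∈ Ia} → {Kk // Kk ∈ S},
          ∑ μ : {x // x ∈ Ib} → {J // J ∈ Q},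
            Finsupp.single (ins (ins P Ia S ι) Ib Q μ) (1 : Kf) := by
  rw [Finset.sum_comm' (t := fun Ia => P.erase Ia) (t' := P)
      (s' := fun Ib => P.erase Ib)
      (fun Ia Ib => by
        simp only [Finset.mem_erase]
        constructor
        · rintro ⟨h1, h2, h3⟩; exact ⟨⟨Ne.symm h2, h1⟩, h3⟩
        · rintro ⟨⟨h1, h2⟩, h3⟩; exact ⟨h2, Ne.symm h1, h3⟩)]
  refine Finset.sum_congr rfl fun Ib hIb => Finset.sum_congr rfl fun Ia hIa => ?_
  rw [Finset.sum_comm]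
  refine Finset.sum_congr rfl fun ι _ => Finset.sum_congr rfl fun μ _ => ?_
  rw [ins_ins_comm (Finset.mem_of_mem_erase hIa) hIb hQ hS hPQ hPS]

end PartitionOps
end

section
/- Let P, Q, S be partitions in a set A whose supports R(P), R(Q), R(S) are pairwise disjoint, and define the bracket [X, Y] := X ∘ Y − Y ∘ X in the free vector space V on partitions in A, extended bilinearly. Then the Jacobi identity holds: [P, [Q, S]] + [Q, [S, P]] + [S, [P, Q]] = 0. -/
set_option linter.unusedSectionVars false
set_option maxHeartbeats 1000000


namespace PartitionOps

variable {α : Type*} [DecidableEq α]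

lemma subset_supp {P : Finset (Finset α)} {I : Finset α} (h : I ∈ P) : I ⊆ supp P :=
  Finset.le_sup (f := id) h

lemma mem_fiber {B : Finset α} {f : {x // x ∈ B} → Finset α} {J : Finset α} {y : α} :
    y ∈ fiber B f J ↔ ∃ h : y ∈ B, f ⟨y, h⟩ = J := by
  simp [fiber]

lemma fiber_subset (B : Finset α) (f : {x // x ∈ B} → Finset α) (J : Finset α) :
    fiber B f J ⊆ B := fun y hy => (mem_fiber.1 hy).1

lemma sum_erase_comm {β M : Type*} [DecidableEq β] [AddCommMonoid M] (s : Finset β)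
    (F : β → β → M) :
    ∑ a ∈ s, ∑ b ∈ s.erase a, F a b = ∑ b ∈ s, ∑ a ∈ s.erase b, F a b := by
  have key : ∀ G : β → β → M, ∑ a ∈ s, ∑ b ∈ s.erase a, G a b
      = ∑ a ∈ s, ∑ b ∈ s, if b ≠ a then G a b else 0 :=
    fun G => Finset.sum_congr rfl fun a _ => by
      rw [← Finset.filter_ne' s a, Finset.sum_filter]
  rw [key F, key (fun b a => F a b), Finset.sum_comm]
  exact Finset.sum_congr rfl fun a _ => Finset.sum_congr rfl fun b _ => by simp [ne_comm]

/-- The new block `J ∪ ι⁻¹(J)`. -/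
def blk (Ia : Finset α) {Q : Finset (Finset α)} (ι : {x // x ∈ Ia} → {J // J ∈ Q})
    (J : Finset α) : Finset α :=
  J ∪ fiber Ia (fun x => (ι x : Finset α)) J

lemma ins_eq (P : Finset (Finset α)) (Ia : Finset α) (Q : Finset (Finset α))
    (ι : {x // x ∈ Ia} → {J // J ∈ Q}) :
    ins P Ia Q ι = P.erase Ia ∪ Q.image (blk Ia ι) := rfl

section Blk
variable {P Q : Finset (Finset α)} {Ia J L : Finset α}
  {ι : {x // x ∈ Ia} → {J // J ∈ Q}}

lemma blk_inter (hPQ : Disjoint (supp P) (supp Q)) (hIa : Ia ⊆ supp P) (hJ : J ∈ Q) :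
    blk Ia ι J ∩ supp Q = J := by
  ext x
  simp only [blk, Finset.mem_inter, Finset.mem_union]
  constructor
  · rintro ⟨hx | hx, hxQ⟩
    · exact hx
    · exact absurd hxQ (Finset.disjoint_left.1 hPQ (hIa (fiber_subset _ _ _ hx)))
  · exact fun hx => ⟨Or.inl hx, subset_supp hJ hx⟩

lemma blk_injOn (hPQ : Disjoint (supp P) (supp Q)) (hIa : Ia ⊆ supp P) :
    Set.InjOn (blk Ia ι) Q := by
  intro J₁ h₁ J₂ h₂ h
  rw [← blk_inter (ι := ι) hPQ hIa h₁, ← blk_inter (ι := ι) hPQ hIa h₂, h]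

lemma blk_ne_of_subset_suppP (hPQ : Disjoint (supp P) (supp Q)) (hIa : Ia ⊆ supp P)
    (hL : L ⊆ supp P) (hJ : J ∈ Q) (hJne : J.Nonempty) : L ≠ blk Ia ι J := by
  intro h
  obtain ⟨x, hx⟩ := hJne
  have hxL : x ∈ L := h ▸ Finset.mem_union_left _ hx
  exact Finset.disjoint_left.1 hPQ (hL hxL) (subset_supp hJ hx)

end Blk

section Split
variable {M : Type*} [AddCommMonoid M]

/-- Splitting a sum over the blocks of an insertion. -/
lemma sum_ins_split {P Q : Finset (Finset α)} {Ia : Finset α}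
    (hQ : ∀ J ∈ Q, J.Nonempty) (hPQ : Disjoint (supp P) (supp Q)) (hIa : Ia ⊆ supp P)
    (ι : {x // x ∈ Ia} → {J // J ∈ Q}) (f : Finset α → M) :
    ∑ B ∈ ins P Ia Q ι, f B = ∑ B ∈ P.erase Ia, f B + ∑ J ∈ Q, f (blk Ia ι J) := by
  rw [ins_eq, Finset.sum_union, Finset.sum_image (blk_injOn hPQ hIa)]
  · rw [Finset.disjoint_left]
    intro L hL hL'
    obtain ⟨J, hJ, rfl⟩ := Finset.mem_image.1 hL'
    exact blk_ne_of_subset_suppP hPQ hIa (subset_supp (Finset.mem_of_mem_erase hL))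
      hJ (hQ J hJ) rfl

/-- Swapping two insertions at distinct blocks of `P`. -/
lemma ins_swap {P Q S : Finset (Finset α)} {Ia Ib : Finset α}
    (hP : IsPartition P) (hQ : ∀ J ∈ Q, J.Nonempty) (hS : ∀ K ∈ S, K.Nonempty)
    (hPQ : Disjoint (supp P) (supp Q)) (hPS : Disjoint (supp P) (supp S))
    (ha : Ia ∈ P) (hb : Ib ∈ P) (hab : Ia ≠ Ib)
    (ι : {x // x ∈ Ia} → {J // J ∈ Q}) (τ : {x // x ∈ Ib} → {K // K ∈ S}) :
    ins (ins P Ia Q ι) Ib S τ = ins (ins P Ib S τ) Ia Q ι := by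
  have hQimage : Ib ∉ Q.image (blk Ia ι) := by
    intro h
    obtain ⟨J, hJ, hEq⟩ := Finset.mem_image.1 h
    exact blk_ne_of_subset_suppP hPQ (subset_supp ha) (subset_supp hb) hJ (hQ J hJ) hEq.symm
  have hSimage : Ia ∉ S.image (blk Ib τ) := by
    intro h
    obtain ⟨K, hK, hEq⟩ := Finset.mem_image.1 h
    exact blk_ne_of_subset_suppP hPS (subset_supp hb) (subset_supp ha) hK (hS K hK) hEq.symm
  simp only [ins_eq]
  rw [Finset.erase_union_distrib,
    Finset.erase_union_distrib, Finset.erase_eq_of_notMem hQimage,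
    Finset.erase_eq_of_notMem hSimage, Finset.erase_right_comm, Finset.union_right_comm]

end Split

variable (Kf : Type*) [Field Kf] [CharZero Kf]

/-- The composition `P ∘ Q = Σ_{a} Σ_{ι : Iₐ → Q} P ∘ₐ^ι Q` of two partitions, as an
element of the free vector space on the partitions in `A`. -/
noncomputable def partComp (P Q : Finset (Finset α)) : Finset (Finset α) →₀ Kf :=
  ∑ Ia ∈ P, ∑ ι : {x // x ∈ Ia} → {J // J ∈ Q},
    Finsupp.single (ins P Ia Q ι) (1 : Kf)

/-- The bilinear extension of the composition to the free vector space. -/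
noncomputable def compV (x y : Finset (Finset α) →₀ Kf) : Finset (Finset α) →₀ Kf :=
  x.sum fun P c => y.sum fun Q d => (c * d) • partComp Kf P Q

/-- The Lie bracket `[X, Y] = X ∘ Y − Y ∘ X` on the free vector space on the
partitions in `A`. -/
noncomputable def bracket (x y : Finset (Finset α) →₀ Kf) : Finset (Finset α) →₀ Kf :=
  compV Kf x y - compV Kf y x

lemma partComp_def (P Q : Finset (Finset α)) :
    partComp Kf P Q = ∑ Ia ∈ P, ∑ ι : {x // x ∈ Ia} → {J // J ∈ Q},
      Finsupp.single (ins P Ia Q ι) (1 : Kf) := rfl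

lemma compV_single_left (P : Finset (Finset α)) (y : Finset (Finset α) →₀ Kf) :
    compV Kf (Finsupp.single P 1) y
      = Finsupp.linearCombination Kf (partComp Kf P) y := by
  rw [compV, Finsupp.sum_single_index (by simp)]
  simp [Finsupp.linearCombination_apply]

lemma compV_single_right (x : Finset (Finset α) →₀ Kf) (S : Finset (Finset α)) :
    compV Kf x (Finsupp.single S 1)
      = Finsupp.linearCombination Kf (fun P => partComp Kf P S) x := by
  rw [compV, Finsupp.linearCombination_apply, Finsupp.sum_congr]
  intro P _
  rw [Finsupp.sum_single_index (by simp)]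
  simp

lemma compV_single_single (P Q : Finset (Finset α)) :
    compV Kf (Finsupp.single P 1) (Finsupp.single Q 1) = partComp Kf P Q := by
  rw [compV_single_left, Finsupp.linearCombination_single, one_smul]

/-- `P ∘ (Q ∘ S)`. -/
noncomputable def compL (P Q S : Finset (Finset α)) : Finset (Finset α) →₀ Kf :=
  Finsupp.linearCombination Kf (partComp Kf P) (partComp Kf Q S)

/-- `(P ∘ Q) ∘ S`. -/
noncomputable def compR (P Q S : Finset (Finset α)) : Finset (Finset α) →₀ Kf :=
  Finsupp.linearCombination Kf (fun T => partComp Kf T S) (partComp Kf P Q)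

lemma compL_eq (P Q S : Finset (Finset α)) :
    compL Kf P Q S = ∑ J ∈ Q, ∑ κ : {y // y ∈ J} → {K // K ∈ S},
      partComp Kf P (ins Q J S κ) := by
  unfold compL
  rw [partComp_def Kf Q S, map_sum]
  exact Finset.sum_congr rfl fun J _ => by
    rw [map_sum]
    exact Finset.sum_congr rfl fun κ _ => by
      rw [Finsupp.linearCombination_single, one_smul]

lemma compR_eq (P Q S : Finset (Finset α)) :
    compR Kf P Q S = ∑ Ia ∈ P, ∑ ι : {x // x ∈ Ia} → {J // J ∈ Q},
      partComp Kf (ins P Ia Q ι) S := by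
  unfold compR
  rw [partComp_def Kf P Q, map_sum]
  exact Finset.sum_congr rfl fun Ia _ => by
    rw [map_sum]
    exact Finset.sum_congr rfl fun ι _ => by
      rw [Finsupp.linearCombination_single, one_smul]

lemma bracket_single_single (Q S : Finset (Finset α)) :
    bracket Kf (Finsupp.single Q 1) (Finsupp.single S 1)
      = partComp Kf Q S - partComp Kf S Q := by
  rw [bracket, compV_single_single, compV_single_single]

lemma bracket_expand (P Q S : Finset (Finset α)) :
    bracket Kf (Finsupp.single P 1)
        (bracket Kf (Finsupp.single Q 1) (Finsupp.single S 1))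
      = compL Kf P Q S - compL Kf P S Q - (compR Kf Q S P - compR Kf S Q P) := by
  rw [bracket_single_single, bracket, compV_single_left, compV_single_right,
    map_sub, map_sub]
  rfl

/-- The symmetric part of the associator. -/
noncomputable def DD (P Q S : Finset (Finset α)) : Finset (Finset α) →₀ Kf :=
  ∑ Ia ∈ P, ∑ Ib ∈ P.erase Ia, ∑ ι : {x // x ∈ Ia} → {J // J ∈ Q},
    ∑ τ : {x // x ∈ Ib} → {K // K ∈ S},
      Finsupp.single (ins (ins P Ia Q ι) Ib S τ) (1 : Kf)

lemma DD_comm (P Q S : Finset (Finset α)) (hP : IsPartition P)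
    (hQ : ∀ J ∈ Q, J.Nonempty) (hS : ∀ K ∈ S, K.Nonempty)
    (hPQ : Disjoint (supp P) (supp Q)) (hPS : Disjoint (supp P) (supp S)) :
    DD Kf P Q S = DD Kf P S Q := by
  unfold DD
  rw [sum_erase_comm P]
  refine Finset.sum_congr rfl fun Ib hb => Finset.sum_congr rfl fun Ia ha' => ?_
  have ha : Ia ∈ P := Finset.mem_of_mem_erase ha'
  have hab : Ia ≠ Ib := Finset.ne_of_mem_erase ha'
  rw [Finset.sum_comm]
  refine Finset.sum_congr rfl fun τ _ => Finset.sum_congr rfl fun ι _ => ?_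
  rw [ins_swap hP hQ hS hPQ hPS ha hb hab]

section Star

variable {P Q S : Finset (Finset α)} {Ia J : Finset α}

/-- Restriction of `τ : (J ∪ ι⁻¹(J)) → S` to `J`. -/
def fwdK {ι : {x // x ∈ Ia} → {J' // J' ∈ Q}}
    (τ : {y // y ∈ blk Ia ι J} → {K // K ∈ S}) : {y // y ∈ J} → {K // K ∈ S} :=
  fun y => τ ⟨y.1, Finset.mem_union_left _ y.2⟩

/-- The forward map on the `ι`-component. -/
def fwdI (ι : {x // x ∈ Ia} → {J' // J' ∈ Q})
    (τ : {y // y ∈ blk Ia ι J} → {K // K ∈ S}) :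
    {x // x ∈ Ia} → {L // L ∈ ins Q J S (fwdK τ)} := fun x =>
  if h : (ι x : Finset α) = J then
    ⟨blk J (fwdK τ)
        (τ ⟨x.1, Finset.mem_union_right _ (mem_fiber.2 ⟨x.2, h⟩)⟩ : Finset α),
      by
        rw [ins_eq]
        exact Finset.mem_union_right _ (Finset.mem_image_of_mem _ (Subtype.coe_prop _))⟩
  else
    ⟨(ι x : Finset α), by
      rw [ins_eq]
      exact Finset.mem_union_left _ (Finset.mem_erase.2 ⟨h, (ι x).2⟩)⟩

lemma ins_mem_notinter (hS : ∀ K ∈ S, K.Nonempty) (hQS : Disjoint (supp Q) (supp S))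
    (hJ : J ∈ Q) {κ : {y // y ∈ J} → {K // K ∈ S}} {L : Finset α}
    (hL : L ∈ ins Q J S κ) (h : ¬(L ∩ supp S).Nonempty) : L ∈ Q.erase J := by
  rw [ins_eq] at hL
  rcases Finset.mem_union.1 hL with hL | hL
  · exact hL
  · obtain ⟨K, hK, rfl⟩ := Finset.mem_image.1 hL
    obtain ⟨k, hk⟩ := hS K hK
    exact absurd ⟨k, Finset.mem_inter.2 ⟨Finset.mem_union_left _ hk, subset_supp hK hk⟩⟩ h

lemma ins_mem_inter (hQS : Disjoint (supp Q) (supp S)) (hJ : J ∈ Q)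
    {κ : {y // y ∈ J} → {K // K ∈ S}} {L : Finset α}
    (hL : L ∈ ins Q J S κ) (h : (L ∩ supp S).Nonempty) :
    (L ∩ supp S) ∈ S ∧ L = blk J κ (L ∩ supp S) := by
  rw [ins_eq] at hL
  rcases Finset.mem_union.1 hL with hL | hL
  · exfalso
    obtain ⟨k, hk⟩ := h
    rw [Finset.mem_inter] at hk
    exact Finset.disjoint_left.1 hQS
      (subset_supp (Finset.mem_of_mem_erase hL) hk.1) hk.2
  · obtain ⟨K, hK, rfl⟩ := Finset.mem_image.1 hL
    rw [blk_inter (P := Q) (Q := S) hQS (subset_supp hJ) hK]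
    exact ⟨hK, rfl⟩

/-- The backward map on the `ι`-component. -/
def bwdI (hS : ∀ K ∈ S, K.Nonempty) (hQS : Disjoint (supp Q) (supp S)) (hJ : J ∈ Q)
    (κ : {y // y ∈ J} → {K // K ∈ S})
    (f : {x // x ∈ Ia} → {L // L ∈ ins Q J S κ}) :
    {x // x ∈ Ia} → {J' // J' ∈ Q} := fun x =>
  if h : ((f x : Finset α) ∩ supp S).Nonempty then ⟨J, hJ⟩
  else ⟨(f x : Finset α), Finset.mem_of_mem_erase (ins_mem_notinter hS hQS hJ (f x).2 h)⟩

/-- The backward map on the `τ`-component. -/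
def bwdT (hS : ∀ K ∈ S, K.Nonempty) (hQS : Disjoint (supp Q) (supp S)) (hJ : J ∈ Q)
    (κ : {y // y ∈ J} → {K // K ∈ S})
    (f : {x // x ∈ Ia} → {L // L ∈ ins Q J S κ}) :
    {y // y ∈ blk Ia (bwdI hS hQS hJ κ f) J} → {K // K ∈ S} := fun z =>
  if h : z.1 ∈ J then κ ⟨z.1, h⟩
  else
    have hz : z.1 ∈ Ia :=
      fiber_subset _ _ _ ((Finset.mem_union.1 z.2).resolve_left h)
    have hns : ((f ⟨z.1, hz⟩ : Finset α) ∩ supp S).Nonempty := by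
      by_contra hcon
      obtain ⟨hz', hfz⟩ := mem_fiber.1 ((Finset.mem_union.1 z.2).resolve_left h)
      rw [bwdI, dif_neg hcon] at hfz
      exact (Finset.ne_of_mem_erase (ins_mem_notinter hS hQS hJ
        (f ⟨z.1, hz⟩).2 hcon)) hfz
    ⟨(f ⟨z.1, hz⟩ : Finset α) ∩ supp S,
      (ins_mem_inter hQS hJ (f ⟨z.1, hz⟩).2 hns).1⟩

lemma fwdI_coe_pos {ι : {x // x ∈ Ia} → {J' // J' ∈ Q}}
    {τ : {y // y ∈ blk Ia ι J} → {K // K ∈ S}} {x : {x // x ∈ Ia}}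
    (h : (ι x : Finset α) = J) :
    (fwdI ι τ x : Finset α)
      = blk J (fwdK τ)
          (τ ⟨x.1, Finset.mem_union_right _ (mem_fiber.2 ⟨x.2, h⟩)⟩ : Finset α) := by
  rw [fwdI, dif_pos h]

lemma fwdI_coe_neg {ι : {x // x ∈ Ia} → {J' // J' ∈ Q}}
    {τ : {y // y ∈ blk Ia ι J} → {K // K ∈ S}} {x : {x // x ∈ Ia}}
    (h : ¬(ι x : Finset α) = J) :
    (fwdI ι τ x : Finset α) = (ι x : Finset α) := by
  rw [fwdI, dif_neg h]

lemma erase_image_of_injOn {β γ : Type*} [DecidableEq β] [DecidableEq γ]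
    {f : β → γ} {s : Finset β} (hf : Set.InjOn f s) {a : β} (ha : a ∈ s) :
    (s.image f).erase (f a) = (s.erase a).image f := by
  ext x
  simp only [Finset.mem_erase, Finset.mem_image]
  constructor
  · rintro ⟨hne, b, hb, rfl⟩
    exact ⟨b, ⟨fun hba => hne (by rw [hba]), hb⟩, rfl⟩
  · rintro ⟨b, ⟨hba, hbs⟩, rfl⟩
    exact ⟨fun hfb => hba (hf hbs ha hfb), b, hbs, rfl⟩

lemma key_eq (hQ : IsPartition Q) (hS : IsPartition S)
    (hPQ : Disjoint (supp P) (supp Q)) (hPS : Disjoint (supp P) (supp S))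
    (hQS : Disjoint (supp Q) (supp S)) (ha : Ia ∈ P) (hJ : J ∈ Q)
    (ι : {x // x ∈ Ia} → {J' // J' ∈ Q})
    (τ : {y // y ∈ blk Ia ι J} → {K // K ∈ S}) :
    ins P Ia (ins Q J S (fwdK τ)) (fwdI ι τ)
      = ins (ins P Ia Q ι) (blk Ia ι J) S τ := by
  have hbJP : blk Ia ι J ∉ P.erase Ia := fun hmem =>
    blk_ne_of_subset_suppP hPQ (subset_supp ha)
      (subset_supp (Finset.mem_of_mem_erase hmem)) hJ (hQ.1 J hJ) rfl
  have hA : ∀ J' ∈ (Q.erase J : Finset (Finset α)),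
      blk Ia (fwdI ι τ) J' = blk Ia ι J' := by
    intro J' hJ'
    have hJ'Q : J' ∈ Q := Finset.mem_of_mem_erase hJ'
    have hJ'J : J' ≠ J := Finset.ne_of_mem_erase hJ'
    unfold blk
    congr 1
    ext x
    rw [mem_fiber, mem_fiber]
    constructor
    · rintro ⟨hx, hval⟩
      by_cases hb : (ι ⟨x, hx⟩ : Finset α) = J
      · exfalso
        rw [fwdI_coe_pos hb] at hval
        set K' := (τ ⟨x, Finset.mem_union_right _ (mem_fiber.2 ⟨hx, hb⟩)⟩ : {K // K ∈ S})
        obtain ⟨k, hk⟩ := hS.1 K' K'.2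
        have hkJ' : k ∈ J' := hval ▸ Finset.mem_union_left _ hk
        exact Finset.disjoint_left.1 hQS (subset_supp hJ'Q hkJ') (subset_supp K'.2 hk)
      · rw [fwdI_coe_neg hb] at hval
        exact ⟨hx, hval⟩
    · rintro ⟨hx, hval⟩
      have hb : ¬(ι ⟨x, hx⟩ : Finset α) = J := by rw [hval]; exact hJ'J
      exact ⟨hx, by rw [fwdI_coe_neg hb, hval]⟩
  have hB : ∀ K ∈ S, (blk Ia (fwdI ι τ) ∘ blk J (fwdK τ)) K
      = blk (blk Ia ι J) τ K := by
    intro K hK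
    ext x
    simp only [Function.comp_apply, blk, Finset.mem_union, mem_fiber]
    constructor
    · rintro ((hx | ⟨hx, hval⟩) | ⟨hx, hval⟩)
      · exact Or.inl hx
      · exact Or.inr ⟨Or.inl hx, hval⟩
      · by_cases hb : (ι ⟨x, hx⟩ : Finset α) = J
        · have hval' : blk J (fwdK τ)
              (τ ⟨x, Finset.mem_union_right _ (mem_fiber.2 ⟨hx, hb⟩)⟩ : Finset α)
              = blk J (fwdK τ) K := (fwdI_coe_pos hb).symm.trans hval
          have hKK : (τ ⟨x, Finset.mem_union_right _ (mem_fiber.2 ⟨hx, hb⟩)⟩ :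
              Finset α) = K := by
            have e1 := blk_inter (P := Q) (Q := S) (ι := fwdK τ) hQS (subset_supp hJ)
              (τ ⟨x, Finset.mem_union_right _ (mem_fiber.2 ⟨hx, hb⟩)⟩).2
            have e2 := blk_inter (P := Q) (Q := S) (ι := fwdK τ) hQS (subset_supp hJ) hK
            calc (τ ⟨x, Finset.mem_union_right _ (mem_fiber.2 ⟨hx, hb⟩)⟩ : Finset α)
                = blk J (fwdK τ)
                    (τ ⟨x, Finset.mem_union_right _ (mem_fiber.2 ⟨hx, hb⟩)⟩ : Finset α)
                    ∩ supp S := e1.symm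
              _ = blk J (fwdK τ) K ∩ supp S := by rw [hval']
              _ = K := e2
          exact Or.inr ⟨Or.inr ⟨hx, hb⟩, hKK⟩
        · exfalso
          rw [fwdI_coe_neg hb] at hval
          obtain ⟨k, hk⟩ := hS.1 K hK
          have hkι : k ∈ (ι ⟨x, hx⟩ : Finset α) := hval ▸ Finset.mem_union_left _ hk
          exact Finset.disjoint_left.1 hQS (subset_supp (ι ⟨x, hx⟩).2 hkι)
            (subset_supp hK hk)
    · rintro (hx | ⟨hx, hval⟩)
      · exact Or.inl (Or.inl hx)
      · rcases hx with hxJ | ⟨hxa, hxv⟩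
        · exact Or.inl (Or.inr ⟨hxJ, hval⟩)
        · refine Or.inr ⟨hxa, ?_⟩
          rw [fwdI_coe_pos hxv]
          exact congrArg (blk J (fwdK τ)) hval
  calc ins P Ia (ins Q J S (fwdK τ)) (fwdI ι τ)
      = P.erase Ia ∪ ((Q.erase J).image (blk Ia (fwdI ι τ))
          ∪ (S.image (blk J (fwdK τ))).image (blk Ia (fwdI ι τ))) :=
        congrArg (P.erase Ia ∪ ·) (Finset.image_union _ _)
    _ = P.erase Ia ∪ ((Q.erase J).image (blk Ia ι)
          ∪ S.image (blk (blk Ia ι J) τ)) := by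
        rw [Finset.image_image, Finset.image_congr (fun J' hJ' => hA J' hJ'),
          Finset.image_congr (fun K hK => hB K hK)]
    _ = (P.erase Ia ∪ (Q.erase J).image (blk Ia ι))
          ∪ S.image (blk (blk Ia ι J) τ) := (Finset.union_assoc _ _ _).symm
    _ = ins (ins P Ia Q ι) (blk Ia ι J) S τ := by
        rw [ins_eq (ins P Ia Q ι), ins_eq P Ia, Finset.erase_union_distrib,
          Finset.erase_eq_of_notMem hbJP,
          erase_image_of_injOn (blk_injOn hPQ (subset_supp ha)) hJ]

lemma sigmaQ_ext {ι₁ ι₂ : {x // x ∈ Ia} → {J' // J' ∈ Q}}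
    {τ₁ : {y // y ∈ blk Ia ι₁ J} → {K // K ∈ S}}
    {τ₂ : {y // y ∈ blk Ia ι₂ J} → {K // K ∈ S}}
    (h : ∀ x : {x // x ∈ Ia}, (ι₁ x : Finset α) = (ι₂ x : Finset α))
    (h2 : ∀ (y : α) (hy₁ : y ∈ blk Ia ι₁ J) (hy₂ : y ∈ blk Ia ι₂ J),
      (τ₁ ⟨y, hy₁⟩ : Finset α) = (τ₂ ⟨y, hy₂⟩ : Finset α)) :
    (⟨ι₁, τ₁⟩ : Σ ι : {x // x ∈ Ia} → {J' // J' ∈ Q},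
        ({y // y ∈ blk Ia ι J} → {K // K ∈ S})) = ⟨ι₂, τ₂⟩ := by
  have hι : ι₁ = ι₂ := funext fun x => Subtype.ext (h x)
  subst hι
  exact congrArg _ (funext fun z => Subtype.ext (h2 z.1 z.2 z.2))

lemma sigmaK_ext {κ₁ κ₂ : {y // y ∈ J} → {K // K ∈ S}}
    {f₁ : {x // x ∈ Ia} → {L // L ∈ ins Q J S κ₁}}
    {f₂ : {x // x ∈ Ia} → {L // L ∈ ins Q J S κ₂}}
    (h : ∀ y, (κ₁ y : Finset α) = (κ₂ y : Finset α))
    (h2 : ∀ x, (f₁ x : Finset α) = (f₂ x : Finset α)) :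
    (⟨κ₁, f₁⟩ : Σ κ : {y // y ∈ J} → {K // K ∈ S},
        ({x // x ∈ Ia} → {L // L ∈ ins Q J S κ})) = ⟨κ₂, f₂⟩ := by
  have hκ : κ₁ = κ₂ := funext fun y => Subtype.ext (h y)
  subst hκ
  exact congrArg _ (funext fun x => Subtype.ext (h2 x))

lemma star_left_inv (hQ : IsPartition Q) (hS : IsPartition S)
    (hPQ : Disjoint (supp P) (supp Q)) (hQS : Disjoint (supp Q) (supp S))
    (hJ : J ∈ Q)
    (ι : {x // x ∈ Ia} → {J' // J' ∈ Q})
    (τ : {y // y ∈ blk Ia ι J} → {K // K ∈ S}) :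
    (⟨bwdI hS.1 hQS hJ (fwdK τ) (fwdI ι τ), bwdT hS.1 hQS hJ (fwdK τ) (fwdI ι τ)⟩ :
        Σ ι' : {x // x ∈ Ia} → {J' // J' ∈ Q},
          ({y // y ∈ blk Ia ι' J} → {K // K ∈ S})) = ⟨ι, τ⟩ := by
  refine sigmaQ_ext ?_ ?_
  · intro x
    by_cases hb : (ι x : Finset α) = J
    · have hc : ((fwdI ι τ x : Finset α) ∩ supp S).Nonempty := by
        rw [fwdI_coe_pos hb, blk_inter (P := Q) (Q := S) hQS (subset_supp hJ)
          (Subtype.coe_prop _)]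
        exact hS.1 _ (Subtype.coe_prop _)
      rw [bwdI, dif_pos hc]
      exact hb.symm
    · have hc : ¬((fwdI ι τ x : Finset α) ∩ supp S).Nonempty := by
        rw [fwdI_coe_neg hb]
        rintro ⟨k, hk⟩
        rw [Finset.mem_inter] at hk
        exact Finset.disjoint_left.1 hQS (subset_supp (ι x).2 hk.1) hk.2
      rw [bwdI, dif_neg hc]
      exact fwdI_coe_neg hb
  · intro y hy₁ hy₂
    by_cases hyJ : y ∈ J
    · rw [bwdT, dif_pos hyJ]
      rfl
    · rw [bwdT, dif_neg hyJ]
      obtain ⟨hz', hxv⟩ := mem_fiber.1 ((Finset.mem_union.1 hy₂).resolve_left hyJ)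
      show (fwdI ι τ ⟨y, _⟩ : Finset α) ∩ supp S = (τ ⟨y, hy₂⟩ : Finset α)
      rw [fwdI_coe_pos (x := ⟨y, hz'⟩) hxv,
        blk_inter (P := Q) (Q := S) hQS (subset_supp hJ) (Subtype.coe_prop _)]

lemma star_right_inv (hQ : IsPartition Q) (hS : IsPartition S)
    (hPQ : Disjoint (supp P) (supp Q)) (hQS : Disjoint (supp Q) (supp S))
    (hIa : Ia ⊆ supp P) (hJ : J ∈ Q)
    (κ : {y // y ∈ J} → {K // K ∈ S})
    (f : {x // x ∈ Ia} → {L // L ∈ ins Q J S κ}) :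
    (⟨fwdK (bwdT hS.1 hQS hJ κ f), fwdI (bwdI hS.1 hQS hJ κ f) (bwdT hS.1 hQS hJ κ f)⟩ :
        Σ κ' : {y // y ∈ J} → {K // K ∈ S},
          ({x // x ∈ Ia} → {L // L ∈ ins Q J S κ'})) = ⟨κ, f⟩ := by
  have hfk : ∀ y, (fwdK (bwdT hS.1 hQS hJ κ f) y : Finset α) = (κ y : Finset α) := by
    intro y
    show (bwdT hS.1 hQS hJ κ f ⟨y.1, _⟩ : Finset α) = _
    rw [bwdT, dif_pos y.2]
  refine sigmaK_ext hfk ?_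
  intro x
  by_cases hc : ((f x : Finset α) ∩ supp S).Nonempty
  · have hb : (bwdI hS.1 hQS hJ κ f x : Finset α) = J := by rw [bwdI, dif_pos hc]
    rw [fwdI_coe_pos hb]
    have hxJ : x.1 ∉ J := fun hmem =>
      Finset.disjoint_left.1 hPQ (hIa x.2) (subset_supp hJ hmem)
    have hbt : (bwdT hS.1 hQS hJ κ f
        ⟨x.1, Finset.mem_union_right _ (mem_fiber.2 ⟨x.2, hb⟩)⟩ : Finset α)
        = (f x : Finset α) ∩ supp S := by
      rw [bwdT, dif_neg hxJ]
    rw [hbt]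
    have hfun : fwdK (bwdT hS.1 hQS hJ κ f) = κ :=
      funext fun y => Subtype.ext (hfk y)
    rw [hfun]
    exact ((ins_mem_inter hQS hJ (f x).2 hc).2).symm
  · have hb : ¬(bwdI hS.1 hQS hJ κ f x : Finset α) = J := by
      rw [bwdI, dif_neg hc]
      exact Finset.ne_of_mem_erase (ins_mem_notinter hS.1 hQS hJ (f x).2 hc)
    rw [fwdI_coe_neg hb, bwdI, dif_neg hc]

end Star

/-- The heart: matching the mixed part of `(P∘Q)∘S` with `P∘(Q∘S)`, at a fixed
block `Ia` of `P` and a fixed block `J` of `Q`. -/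
lemma star (P Q S : Finset (Finset α)) (Ia J : Finset α)
    (hP : IsPartition P) (hQ : IsPartition Q) (hS : IsPartition S)
    (hPQ : Disjoint (supp P) (supp Q)) (hPS : Disjoint (supp P) (supp S))
    (hQS : Disjoint (supp Q) (supp S)) (ha : Ia ∈ P) (hJ : J ∈ Q) :
    ∑ ι : {x // x ∈ Ia} → {J' // J' ∈ Q},
      ∑ τ : {y // y ∈ blk Ia ι J} → {K // K ∈ S},
        Finsupp.single (ins (ins P Ia Q ι) (blk Ia ι J) S τ) (1 : Kf)
    = ∑ κ : {y // y ∈ J} → {K // K ∈ S},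
        ∑ ι' : {x // x ∈ Ia} → {L // L ∈ ins Q J S κ},
          Finsupp.single (ins P Ia (ins Q J S κ) ι') (1 : Kf) := by
  have h1 : ∀ ι : {x // x ∈ Ia} → {J' // J' ∈ Q},
      (∑ τ : {y // y ∈ blk Ia ι J} → {K // K ∈ S},
        Finsupp.single (ins (ins P Ia Q ι) (blk Ia ι J) S τ) (1 : Kf))
      = ∑ τ ∈ Finset.univ, Finsupp.single (ins (ins P Ia Q ι) (blk Ia ι J) S τ) (1 : Kf) :=
    fun _ => rfl
  rw [Finset.sum_sigma' Finset.univ (fun ι => Finset.univ)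
      (fun ι τ => Finsupp.single (ins (ins P Ia Q ι) (blk Ia ι J) S τ) (1 : Kf)),
    Finset.sum_sigma' Finset.univ (fun κ => Finset.univ)
      (fun κ ι' => Finsupp.single (ins P Ia (ins Q J S κ) ι') (1 : Kf))]
  refine Finset.sum_bij'
    (fun p _ => (⟨fwdK p.2, fwdI p.1 p.2⟩ :
      Σ κ : {y // y ∈ J} → {K // K ∈ S},
        ({x // x ∈ Ia} → {L // L ∈ ins Q J S κ})))
    (fun q _ => (⟨bwdI hS.1 hQS hJ q.1 q.2, bwdT hS.1 hQS hJ q.1 q.2⟩ :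
      Σ ι : {x // x ∈ Ia} → {J' // J' ∈ Q},
        ({y // y ∈ blk Ia ι J} → {K // K ∈ S})))
    (fun _ _ => Finset.mem_sigma.2 ⟨Finset.mem_univ _, Finset.mem_univ _⟩)
    (fun _ _ => Finset.mem_sigma.2 ⟨Finset.mem_univ _, Finset.mem_univ _⟩)
    ?_ ?_ ?_
  · rintro ⟨ι, τ⟩ _
    exact star_left_inv hQ hS hPQ hQS hJ ι τ
  · rintro ⟨κ, f⟩ _
    exact star_right_inv hQ hS hPQ hQS (subset_supp ha) hJ κ f
  · rintro ⟨ι, τ⟩ _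
    exact congrArg (fun T => Finsupp.single T (1 : Kf))
      (key_eq hQ hS hPQ hPS hQS ha hJ ι τ).symm

lemma assoc_split (P Q S : Finset (Finset α))
    (hP : IsPartition P) (hQ : IsPartition Q) (hS : IsPartition S)
    (hPQ : Disjoint (supp P) (supp Q)) (hPS : Disjoint (supp P) (supp S))
    (hQS : Disjoint (supp Q) (supp S)) :
    compR Kf P Q S = DD Kf P Q S + compL Kf P Q S := by
  rw [compR_eq]
  have step : ∀ Ia ∈ P, ∀ ι : {x // x ∈ Ia} → {J // J ∈ Q},
      partComp Kf (ins P Ia Q ι) S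
        = (∑ Ib ∈ P.erase Ia, ∑ τ : {x // x ∈ Ib} → {K // K ∈ S},
            Finsupp.single (ins (ins P Ia Q ι) Ib S τ) (1 : Kf))
          + ∑ J ∈ Q, ∑ τ : {y // y ∈ blk Ia ι J} → {K // K ∈ S},
            Finsupp.single (ins (ins P Ia Q ι) (blk Ia ι J) S τ) (1 : Kf) := by
    intro Ia ha ι
    rw [partComp]
    exact sum_ins_split hQ.1 hPQ (subset_supp ha) ι _
  calc ∑ Ia ∈ P, ∑ ι : {x // x ∈ Ia} → {J // J ∈ Q}, partComp Kf (ins P Ia Q ι) S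
      = (∑ Ia ∈ P, ∑ ι : {x // x ∈ Ia} → {J // J ∈ Q},
          ∑ Ib ∈ P.erase Ia, ∑ τ : {x // x ∈ Ib} → {K // K ∈ S},
            Finsupp.single (ins (ins P Ia Q ι) Ib S τ) (1 : Kf))
        + ∑ Ia ∈ P, ∑ ι : {x // x ∈ Ia} → {J // J ∈ Q},
          ∑ J ∈ Q, ∑ τ : {y // y ∈ blk Ia ι J} → {K // K ∈ S},
            Finsupp.single (ins (ins P Ia Q ι) (blk Ia ι J) S τ) (1 : Kf) := by
        rw [← Finset.sum_add_distrib]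
        refine Finset.sum_congr rfl fun Ia ha => ?_
        rw [← Finset.sum_add_distrib]
        exact Finset.sum_congr rfl fun ι _ => step Ia ha ι
    _ = DD Kf P Q S + compL Kf P Q S := by
        congr 1
        · rw [DD]
          exact Finset.sum_congr rfl fun Ia _ => Finset.sum_comm
        · rw [compL_eq]
          calc ∑ Ia ∈ P, ∑ ι : {x // x ∈ Ia} → {J // J ∈ Q},
                ∑ J ∈ Q, ∑ τ : {y // y ∈ blk Ia ι J} → {K // K ∈ S},
                  Finsupp.single (ins (ins P Ia Q ι) (blk Ia ι J) S τ) (1 : Kf)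
              = ∑ Ia ∈ P, ∑ J ∈ Q, ∑ ι : {x // x ∈ Ia} → {J' // J' ∈ Q},
                ∑ τ : {y // y ∈ blk Ia ι J} → {K // K ∈ S},
                  Finsupp.single (ins (ins P Ia Q ι) (blk Ia ι J) S τ) (1 : Kf) :=
                Finset.sum_congr rfl fun Ia _ => Finset.sum_comm
            _ = ∑ Ia ∈ P, ∑ J ∈ Q, ∑ κ : {y // y ∈ J} → {K // K ∈ S},
                ∑ ι' : {x // x ∈ Ia} → {L // L ∈ ins Q J S κ},
                  Finsupp.single (ins P Ia (ins Q J S κ) ι') (1 : Kf) :=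
                Finset.sum_congr rfl fun Ia ha => Finset.sum_congr rfl fun J hJ =>
                  star Kf P Q S Ia J hP hQ hS hPQ hPS hQS ha hJ
            _ = ∑ J ∈ Q, ∑ Ia ∈ P, ∑ κ : {y // y ∈ J} → {K // K ∈ S},
                ∑ ι' : {x // x ∈ Ia} → {L // L ∈ ins Q J S κ},
                  Finsupp.single (ins P Ia (ins Q J S κ) ι') (1 : Kf) := Finset.sum_comm
            _ = ∑ J ∈ Q, ∑ κ : {y // y ∈ J} → {K // K ∈ S},
                ∑ Ia ∈ P, ∑ ι' : {x // x ∈ Ia} → {L // L ∈ ins Q J S κ},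
                  Finsupp.single (ins P Ia (ins Q J S κ) ι') (1 : Kf) :=
                Finset.sum_congr rfl fun J _ => Finset.sum_comm
            _ = ∑ J ∈ Q, ∑ κ : {y // y ∈ J} → {K // K ∈ S},
                  partComp Kf P (ins Q J S κ) := rfl

lemma assoc_symm (P Q S : Finset (Finset α))
    (hP : IsPartition P) (hQ : IsPartition Q) (hS : IsPartition S)
    (hPQ : Disjoint (supp P) (supp Q)) (hPS : Disjoint (supp P) (supp S))
    (hQS : Disjoint (supp Q) (supp S)) :
    compR Kf P Q S - compL Kf P Q S = compR Kf P S Q - compL Kf P S Q := by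
  rw [assoc_split Kf P Q S hP hQ hS hPQ hPS hQS,
    assoc_split Kf P S Q hP hS hQ hPS hPQ hQS.symm,
    add_sub_cancel_right, add_sub_cancel_right,
    DD_comm Kf P Q S hP hQ.1 hS.1 hPQ hPS]

/-- for partitions `P`, `Q`, `S` with pairwise disjoint supports, the
bracket `[X, Y] = X ∘ Y − Y ∘ X` satisfies the Jacobi identity
`[P, [Q, S]] + [Q, [S, P]] + [S, [P, Q]] = 0`. -/
theorem bracket_jacobi (P Q S : Finset (Finset α))
    (hP : IsPartition P) (hQ : IsPartition Q) (hS : IsPartition S)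
    (hPQ : Disjoint (supp P) (supp Q)) (hPS : Disjoint (supp P) (supp S))
    (hQS : Disjoint (supp Q) (supp S)) :
    bracket Kf (Finsupp.single P 1)
        (bracket Kf (Finsupp.single Q 1) (Finsupp.single S 1)) +
      bracket Kf (Finsupp.single Q 1)
        (bracket Kf (Finsupp.single S 1) (Finsupp.single P 1)) +
      bracket Kf (Finsupp.single S 1)
        (bracket Kf (Finsupp.single P 1) (Finsupp.single Q 1)) = 0 := by
  have k1 := assoc_symm Kf P Q S hP hQ hS hPQ hPS hQS
  have k2 := assoc_symm Kf Q S P hQ hS hP hQS hPQ.symm hPS.symm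
  have k3 := assoc_symm Kf S P Q hS hP hQ hPS.symm hQS.symm hPQ
  rw [bracket_expand, bracket_expand, bracket_expand]
  have e : compL Kf P Q S - compL Kf P S Q - (compR Kf Q S P - compR Kf S Q P) +
      (compL Kf Q S P - compL Kf Q P S - (compR Kf S P Q - compR Kf P S Q)) +
      (compL Kf S P Q - compL Kf S Q P - (compR Kf P Q S - compR Kf Q P S))
      = ((compR Kf P S Q - compL Kf P S Q) - (compR Kf P Q S - compL Kf P Q S)) +
        (((compR Kf Q P S - compL Kf Q P S) - (compR Kf Q S P - compL Kf Q S P)) +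
          ((compR Kf S Q P - compL Kf S Q P) - (compR Kf S P Q - compL Kf S P Q))) := by
    abel
  rw [e, ← k1, ← k2, ← k3]
  simp

end PartitionOps
end
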